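/- Suppose every element a of a commutative ring R admits b with ab nilpotent and a + b regular. Then every aregular element of R is regular. -/

import Mathlib

open scoped nonZeroDivisors

theorem add_mem_nonZeroDivisors_of_isNilpotent {R : Type*} [CommRing R] {r n : R}
    (hr : r ∈ R⁰) (hn : IsNilpotent n) : r + n ∈ R⁰ := by
  obtain ⟨m, hm⟩ := hn
  -- `r + n = r - (-n)` divides `r ^ m - (-n) ^ m = r ^ m`, which is regular.
  obtain ⟨c, hc⟩ : r + n ∣ r ^ m := by
    have := sub_dvd_pow_sub_pow r (-n) m
    rwa [sub_neg_eq_add, neg_pow, hm, mul_zero, sub_zero] at this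
  refine mem_nonZeroDivisors_iff_right.mpr fun x hx => ?_
  refine mem_nonZeroDivisors_iff_right.mp (pow_mem hr m) x ?_
  rw [hc, ← mul_assoc, hx, zero_mul]

theorem aregular_regular_of_pi_complemented_general {R : Type*} [CommRing R]
    (h : ∀ a : R, ∃ b : R, IsNilpotent (a * b) ∧ a + b ∈ nonZeroDivisors R) :
    ∀ a : R, (∀ x : R, IsNilpotent (a * x) → IsNilpotent x) → a ∈ nonZeroDivisors R := by
  intro a ha
  obtain ⟨b, hab, hreg⟩ := h a
  have hb : IsNilpotent (-b) := (ha b hab).neg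
  simpa using add_mem_nonZeroDivisors_of_isNilpotent hreg hb

theorem aregular_regular_of_pi_complemented {R : Type*} [CommRing R] [Nontrivial R]
    (h : ∀ a : R, ∃ b : R, IsNilpotent (a * b) ∧ a + b ∈ nonZeroDivisors R) :
    ∀ a : R, (∀ x : R, IsNilpotent (a * x) → IsNilpotent x) → a ∈ nonZeroDivisors R :=
  aregular_regular_of_pi_complemented_general h
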